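/- Assume each γₑ is continuously differentiable with γₑ' ≥ 0, and let A₁, A₂ be real n × m matrices such that for some index e ∈ {1, …, m}, the e-th column of A₁ is nonzero while the e-th column of A₂ is zero. For j = 1, 2 and each w ∈ ℝ^m, let y_j(w) ∈ ℝⁿ denote the unique solution of κ(y) + A_j γ(A_jᵀ y) = −A_j w. Then the set { w ∈ ℝ^m : y₁(w) = y₂(w) } has Lebesgue measure zero in ℝ^m. Consequently, if w is sampled from any probability measure on ℝ^m that is absolutely continuous with respect to Lebesgue measure, then with probability one the two steady-state outputs differ: y₁(w) ≠ y₂(w). -/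

import Mathlib

/-!
The steady-state map `F_A y = κ(y) + A γ(Aᵀ y)` is strongly monotone, hence a topological
embedding, so `y₂` is continuous; and since the `e`-th column of `A₂` vanishes, `y₂(w)` does not
depend on `w_e`. Where `y₁(w) = y₂(w)`, the row `i` of the equation for `A₁` with `A₁ i e ≠ 0`
therefore determines `w_e` continuously from the other coordinates: the coincidence set lies in
the graph of a measurable function, which is Lebesgue-null by Fubini.
-/

open MeasureTheory Function Matrix Topology

theorem mul_sq_le_sub_mul_sub_of_le_deriv {f : ℝ → ℝ} (hf : Differentiable ℝ f) {C : ℝ}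
    (hf' : ∀ x, C ≤ deriv f x) (a b : ℝ) : C * (a - b) ^ 2 ≤ (f a - f b) * (a - b) := by
  rcases le_total b a with hba | hab
  · nlinarith [mul_sub_le_image_sub_of_le_deriv hf hf' hba, sub_nonneg.2 hba]
  · nlinarith [mul_sub_le_image_sub_of_le_deriv hf hf' hab, sub_nonneg.2 hab]

theorem Matrix.mulVec_update_apply {ι η R : Type*} [Fintype η] [DecidableEq η] [Ring R]
    (A : Matrix ι η R) (w : η → R) (e : η) (t : R) (i : ι) :
    (A *ᵥ update w e t) i = (A *ᵥ w) i + A i e * (t - w e) := by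
  rw [← sub_eq_iff_eq_add', ← Pi.sub_apply, ← Matrix.mulVec_sub]
  have : update w e t - w = Pi.single e (t - w e) := by
    ext j; rcases eq_or_ne j e with rfl | hj <;> simp [*]
  simp [this]

theorem antilipschitzWith_of_le_inner {E : Type*} [NormedAddCommGroup E] [InnerProductSpace ℝ E]
    {F : E → E} {ρ : NNReal} (hρ : 0 < ρ)
    (hF : ∀ x y, ρ * ‖x - y‖ ^ 2 ≤ inner ℝ (F x - F y) (x - y)) :
    AntilipschitzWith ρ⁻¹ F := by
  refine AntilipschitzWith.of_le_mul_dist fun x y => ?_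
  rw [dist_eq_norm, dist_eq_norm, NNReal.coe_inv, ← div_eq_inv_mul,
    le_div_iff₀ (by exact_mod_cast hρ)]
  rcases (norm_nonneg (x - y)).eq_or_lt with h0 | hpos
  · rw [← h0, zero_mul]; exact norm_nonneg _
  · refine le_of_mul_le_mul_right ?_ hpos
    calc ‖x - y‖ * ρ * ‖x - y‖ = ρ * ‖x - y‖ ^ 2 := by ring
      _ ≤ ‖F x - F y‖ * ‖x - y‖ := (hF x y).trans (real_inner_le_norm _ _)

theorem isEmbedding_of_le_dotProduct {ι : Type*} [Fintype ι] {F : (ι → ℝ) → ι → ℝ}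
    (hFc : Continuous F) {ρ : ℝ} (hρ : 0 < ρ)
    (hF : ∀ x y, ρ * ((x - y) ⬝ᵥ (x - y)) ≤ (F x - F y) ⬝ᵥ (x - y)) : IsEmbedding F := by
  let T := (EuclideanSpace.equiv ι ℝ).toHomeomorph
  let G := T.symm ∘ F ∘ T
  have hG : AntilipschitzWith (Real.toNNReal ρ)⁻¹ G := by
    refine antilipschitzWith_of_le_inner (Real.toNNReal_pos.2 hρ) fun x y => ?_
    rw [Real.coe_toNNReal _ hρ.le, ← real_inner_self_eq_norm_sq]
    simp only [EuclideanSpace.inner_eq_star_dotProduct, WithLp.ofLp_sub, star_trivial]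
    rw [dotProduct_comm _ ((G x).ofLp - _)]
    exact hF x.ofLp y.ofLp
  have hGc : Continuous G := T.symm.continuous.comp (hFc.comp T.continuous)
  have hFG : F = T ∘ G ∘ T.symm := by ext x; simp [G]
  rw [hFG]
  exact T.isEmbedding.comp ((hG.isEmbedding hGc).comp T.symm.isEmbedding)

theorem MeasureTheory.Measure.prod_setOf_fst_eq_null {α β : Type*} [MeasurableSpace α]
    [MeasurableSpace β] [MeasurableEq α] (μ : Measure α) [NullSingletonClass μ] [SFinite μ]
    (ν : Measure β) [SFinite ν] {g : β → α} (hg : Measurable g) : μ.prod ν {p | p.1 = g p.2} = 0 := by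
  rw [Measure.prod_apply_symm (s := {p : α × β | p.1 = g p.2})
    (measurableSet_eq_fun measurable_fst (hg.comp measurable_snd))]
  simp

theorem volume_setOf_apply_eq_update_null {m : ℕ} (e : Fin m) {h : (Fin m → ℝ) → ℝ}
    (hh : Measurable h) : volume {w : Fin m → ℝ | w e = h (update w e 0)} = 0 := by
  obtain ⟨k, rfl⟩ := Nat.exists_eq_add_one_of_ne_zero e.pos.ne'
  let φ := MeasurableEquiv.piFinSuccAbove (fun _ : Fin (k + 1) => ℝ) e
  have hgraph : {w : Fin (k + 1) → ℝ | w e = h (update w e 0)} =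
      φ ⁻¹' {p | p.1 = h (φ.symm (0, p.2))} := by
    ext w; simp [φ, Fin.insertNthEquiv]
  have hg : Measurable fun u : Fin k → ℝ => h (φ.symm (0, u)) :=
    hh.comp (φ.symm.measurable.comp (measurable_const.prodMk measurable_id))
  rw [hgraph, (volume_preserving_piFinSuccAbove (fun _ => ℝ) e).measure_preimage_equiv,
    Measure.volume_eq_prod]
  exact Measure.prod_setOf_fst_eq_null _ _ hg

section SteadyState

variable {ι η : Type*} [Fintype ι] [Fintype η] {κ : ι → ℝ → ℝ} {γ : η → ℝ → ℝ}

variable (κ γ) in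
def steadyStateMap (A : Matrix ι η ℝ) (y : ι → ℝ) : ι → ℝ :=
  fun i => κ i (y i) + A.mulVec (fun f => γ f (A.transpose.mulVec y f)) i

theorem continuous_steadyStateMap (hκ : ∀ i, Continuous (κ i)) (hγ : ∀ f, Continuous (γ f))
    (A : Matrix ι η ℝ) : Continuous (steadyStateMap κ γ A) := by
  unfold steadyStateMap
  fun_prop

theorem steadyStateMap_stronglyMonotone {ρ : ℝ}
    (hκ : ∀ i a b, ρ * (a - b) ^ 2 ≤ (κ i a - κ i b) * (a - b))
    (hγ : ∀ f a b, 0 ≤ (γ f a - γ f b) * (a - b)) (A : Matrix ι η ℝ) (y y' : ι → ℝ) :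
    ρ * ((y - y') ⬝ᵥ (y - y')) ≤
      (steadyStateMap κ γ A y - steadyStateMap κ γ A y') ⬝ᵥ (y - y') := by
  set G : (ι → ℝ) → η → ℝ := fun y f => γ f ((Aᵀ *ᵥ y) f)
  have hsplit : (steadyStateMap κ γ A y - steadyStateMap κ γ A y') ⬝ᵥ (y - y') =
      ∑ i, (κ i (y i) - κ i (y' i)) * (y i - y' i) + (G y - G y') ⬝ᵥ (Aᵀ *ᵥ y - Aᵀ *ᵥ y') := by
    have hdiff : steadyStateMap κ γ A y - steadyStateMap κ γ A y' =
        (fun i => κ i (y i) - κ i (y' i)) + A *ᵥ (G y - G y') := by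
      ext i; simp only [steadyStateMap, Pi.sub_apply, Pi.add_apply, mulVec_sub, G]; ring
    rw [hdiff, add_dotProduct, ← mulVec_sub, mulVec_transpose, dotProduct_comm (A *ᵥ _),
      dotProduct_mulVec, dotProduct_comm _ (G y - G y')]
    rfl
  have hcoupling : 0 ≤ (G y - G y') ⬝ᵥ (Aᵀ *ᵥ y - Aᵀ *ᵥ y') :=
    Finset.sum_nonneg fun f _ => hγ f _ _
  rw [hsplit, dotProduct, Finset.mul_sum]
  exact le_add_of_le_of_nonneg
    (Finset.sum_le_sum fun i _ => by simpa [sq] using hκ i (y i) (y' i)) hcoupling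

theorem isEmbedding_steadyStateMap {ρ : ℝ} (hρ : 0 < ρ) (hκ : ∀ i, Differentiable ℝ (κ i))
    (hκ' : ∀ i s, ρ ≤ deriv (κ i) s) (hγ : ∀ f, Differentiable ℝ (γ f))
    (hγ' : ∀ f s, 0 ≤ deriv (γ f) s) (A : Matrix ι η ℝ) :
    IsEmbedding (steadyStateMap κ γ A) :=
  isEmbedding_of_le_dotProduct
    (continuous_steadyStateMap (fun i => (hκ i).continuous) (fun f => (hγ f).continuous) A) hρ
    (steadyStateMap_stronglyMonotone
      (fun i => mul_sq_le_sub_mul_sub_of_le_deriv (hκ i) (hκ' i))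
      (fun f a b => by simpa using mul_sq_le_sub_mul_sub_of_le_deriv (hγ f) (hγ' f) a b) A)

end SteadyState

theorem stmt_7_general (n m : ℕ) (ρ : ℝ) (hρ : 0 < ρ)
    (κ : Fin n → ℝ → ℝ) (hκ : ∀ i, ContDiff ℝ 1 (κ i)) (hκ' : ∀ i s, ρ ≤ deriv (κ i) s)
    (γ : Fin m → ℝ → ℝ) (hγ : ∀ e, ContDiff ℝ 1 (γ e)) (hγ' : ∀ e s, 0 ≤ deriv (γ e) s)
    (A₁ A₂ : Matrix (Fin n) (Fin m) ℝ) (e : Fin m)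
    (hA₁ : ∃ i, A₁ i e ≠ 0) (hA₂ : ∀ i, A₂ i e = 0)
    (y₁ y₂ : (Fin m → ℝ) → Fin n → ℝ)
    (hy₁ : ∀ w : Fin m → ℝ,
      (fun i => κ i (y₁ w i) + A₁.mulVec (fun f => γ f (A₁.transpose.mulVec (y₁ w) f)) i)
        = -(A₁.mulVec w))
    (hy₂ : ∀ w : Fin m → ℝ,
      (fun i => κ i (y₂ w i) + A₂.mulVec (fun f => γ f (A₂.transpose.mulVec (y₂ w) f)) i)
        = -(A₂.mulVec w)) :
    volume {w : Fin m → ℝ | y₁ w = y₂ w} = 0 ∧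
    ∀ μ : Measure (Fin m → ℝ), IsProbabilityMeasure μ → μ ≪ volume →
      μ {w : Fin m → ℝ | y₁ w ≠ y₂ w} = 1 := by
  obtain ⟨i, hi⟩ := hA₁
  have hF₁y w : steadyStateMap κ γ A₁ (y₁ w) = -(A₁ *ᵥ w) := hy₁ w
  have hF₂y w : steadyStateMap κ γ A₂ (y₂ w) = -(A₂ *ᵥ w) := hy₂ w
  have hκd i := (hκ i).differentiable one_ne_zero
  have hγd f := (hγ f).differentiable one_ne_zero
  have hF₂ := isEmbedding_steadyStateMap hρ hκd hκ' hγd hγ' A₂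
  have hy₂c : Continuous y₂ :=
    hF₂.continuous_iff.2 (by rw [show steadyStateMap κ γ A₂ ∘ y₂ = _ from funext hF₂y]; fun_prop)
  have hy₂e w : y₂ (update w e 0) = y₂ w := hF₂.injective <| by
    rw [hF₂y, hF₂y]; ext j; simp [mulVec_update_apply, hA₂]
  let h v := -(steadyStateMap κ γ A₁ (y₂ v) i + (A₁ *ᵥ v) i) / A₁ i e
  have hsub : {w | y₁ w = y₂ w} ⊆ {w | w e = h (update w e 0)} := by
    intro w hw
    have hrow := congrFun (hF₁y w) i
    rw [show y₁ w = y₂ (update w e 0) from hw.trans (hy₂e w).symm] at hrow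
    show w e = h (update w e 0)
    simp only [h, mulVec_update_apply, hrow, Pi.neg_apply]
    field_simp
    ring
  have hh : Continuous h := by
    have := continuous_steadyStateMap (fun i => (hκ i).continuous) (fun f => (hγ f).continuous) A₁
    unfold h; fun_prop
  have hnull := measure_mono_null hsub (volume_setOf_apply_eq_update_null e hh.measurable)
  exact ⟨hnull, fun μ _ hμ => (prob_compl_eq_one_iff₀ (.of_null (hμ hnull))).2 (hμ hnull)⟩

/-- With `κᵢ : ℝ → ℝ` continuously differentiable with `κᵢ' ≥ ρ > 0`,
`γₑ : ℝ → ℝ` continuously differentiable with `γₑ' ≥ 0`, let `A₁, A₂` be real `n × m`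
matrices such that for some index `e`, the `e`-th column of `A₁` is nonzero while the
`e`-th column of `A₂` is zero. For `j = 1, 2`, let `y_j(w)` denote the unique solution of
`κ(y) + A_j γ(A_jᵀ y) = −A_j w`. Then `{w : y₁(w) = y₂(w)}` has Lebesgue measure zero;
consequently, for any probability measure absolutely continuous w.r.t. Lebesgue measure,
with probability one `y₁(w) ≠ y₂(w)`. -/
theorem stmt_7 (n m : ℕ) (hn : 0 < n) (hm : 0 < m) (ρ : ℝ) (hρ : 0 < ρ)
    (κ : Fin n → ℝ → ℝ) (hκ : ∀ i, ContDiff ℝ 1 (κ i)) (hκ' : ∀ i s, ρ ≤ deriv (κ i) s)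
    (γ : Fin m → ℝ → ℝ) (hγ : ∀ e, ContDiff ℝ 1 (γ e)) (hγ' : ∀ e s, 0 ≤ deriv (γ e) s)
    (A₁ A₂ : Matrix (Fin n) (Fin m) ℝ) (e : Fin m)
    (hA₁ : ∃ i, A₁ i e ≠ 0) (hA₂ : ∀ i, A₂ i e = 0)
    (y₁ y₂ : (Fin m → ℝ) → Fin n → ℝ)
    (hy₁ : ∀ w : Fin m → ℝ,
      (fun i => κ i (y₁ w i) + A₁.mulVec (fun f => γ f (A₁.transpose.mulVec (y₁ w) f)) i)
        = -(A₁.mulVec w))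
    (hy₂ : ∀ w : Fin m → ℝ,
      (fun i => κ i (y₂ w i) + A₂.mulVec (fun f => γ f (A₂.transpose.mulVec (y₂ w) f)) i)
        = -(A₂.mulVec w)) :
    volume {w : Fin m → ℝ | y₁ w = y₂ w} = 0 ∧
    ∀ μ : Measure (Fin m → ℝ), IsProbabilityMeasure μ → μ ≪ volume →
      μ {w : Fin m → ℝ | y₁ w ≠ y₂ w} = 1 :=
  stmt_7_general n m ρ hρ κ hκ hκ' γ hγ hγ' A₁ A₂ e hA₁ hA₂ y₁ y₂ hy₁ hy₂
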